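/- Let $k \geq 2$ and $t \in (0,1)$. Define $D(k,t) = H(\gamma^*_t) - 2H(x^*_t)$, where $H(v) = -\sum_i v_i \log v_i$ is the Shannon entropy, $\gamma^*_t \in \Delta_{k^2}$ is the vector with one entry $t + (1-t)/k^2$ and $k^2 - 1$ entries $(1-t)/k^2$, and $x^*_t \in \Delta_k$ has one entry $a = \varphi(1/k,t) = (\sqrt{(1-t)/k} + \sqrt{t(1 - 1/k)})^2$ and $k-1$ entries $(1-a)/(k-1)$. Then for fixed $t \in (0,1)$, $D(k,t) \to t\log t + (1-t)\log(1-t)$ as $k \to \infty$. -/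

import Mathlib

/-! Both vectors are perturbations of the two-point distribution `(t, 1 - t)`. By the grouping
rule, the entropy of `(p, q, …, q)` with `n` copies of `q = (1 - p) / n` is `h(p) + (1 - p) log n`,
`h` the binary entropy, so
`D(k,t) = h(p_k) - 2 h(a_k) + (1 - p_k) log (k² - 1) - 2 (1 - a_k) log (k - 1)` with
`p_k = t + (1 - t)/k² → t` and `a_k = φ(1/k, t) → t`. The binary entropies tend to `-h(t)`, and
the logarithmic terms are `2 (a_k - p_k) log k + o(1)`, which vanishes because
`a_k - t = O(k^{-1/2})` while `log k = o(k^{1/2})`. -/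

open Filter Real Set Topology

noncomputable section

/-- The entropy `-∑ vᵢ log vᵢ` of the vector `v = (p, q, …, q)` with `n` copies of `q`. -/
def spikeEntropy (p n q : ℝ) : ℝ := -(p * log p + n * q * log q)

def phi (p t : ℝ) : ℝ := (√((1 - t) * p) + √(t * (1 - p))) ^ 2

end

lemma spikeEntropy_eq_binEntropy_add {p n q : ℝ} (hn : n ≠ 0) (hq : p + n * q = 1) :
    spikeEntropy p n q = binEntropy p + (1 - p) * log n := by
  obtain rfl : q = (1 - p) / n := by field_simp; linarith
  rw [spikeEntropy, binEntropy_eq_negMulLog_add_negMulLog_one_sub, negMulLog, negMulLog,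
    mul_div_cancel₀ _ hn]
  rcases eq_or_ne (1 - p) 0 with h | h
  · simp [h]
  · rw [log_div h hn]
    ring

lemma tendsto_phi_one_div_atTop {t : ℝ} (ht : 0 ≤ t) :
    Tendsto (fun x : ℝ => phi (1 / x) t) atTop (𝓝 t) := by
  have hcont : Continuous fun p => phi p t := by unfold phi; fun_prop
  have hzero : phi 0 t = t := by simp [phi, sq_sqrt ht]
  exact (hcont.tendsto' 0 t hzero).comp (tendsto_const_nhds.div_atTop tendsto_id)

lemma abs_phi_sub_le {p t : ℝ} (hp : p ∈ Icc 0 1) (ht : t ∈ Icc 0 1) :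
    |phi p t - t| ≤ 3 * √p := by
  obtain ⟨hp0, hp1⟩ := hp
  obtain ⟨ht0, ht1⟩ := ht
  have hA : √((1 - t) * p) ≤ √p := sqrt_le_sqrt (by nlinarith)
  have hB : √(t * (1 - p)) ≤ 1 := sqrt_le_one.mpr (by nlinarith)
  have hp_le : p ≤ √p := by
    rw [le_sqrt hp0 hp0]
    nlinarith
  have hexpand : phi p t - t = p * (1 - 2 * t) + 2 * √((1 - t) * p) * √(t * (1 - p)) := by
    rw [phi, add_sq, sq_sqrt (by nlinarith), sq_sqrt (by nlinarith)]
    ring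
  rw [hexpand, abs_le]
  constructor <;> nlinarith [sqrt_nonneg ((1 - t) * p), sqrt_nonneg (t * (1 - p))]

lemma abs_phi_one_div_sub_le {t x : ℝ} (ht : t ∈ Icc 0 1) (hx : 1 ≤ x) :
    |phi (1 / x) t - (t + (1 - t) / x ^ 2)| ≤ 4 * √x⁻¹ := by
  have hxinv : 0 < x⁻¹ := inv_pos.mpr (by linarith)
  have hinv : x⁻¹ ≤ 1 := inv_le_one_of_one_le₀ hx
  have hphi : |phi x⁻¹ t - t| ≤ 3 * √x⁻¹ := abs_phi_sub_le ⟨hxinv.le, hinv⟩ ht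
  have hsqrt : x⁻¹ ≤ √x⁻¹ := by
    rw [le_sqrt hxinv.le hxinv.le]
    nlinarith
  have hq : (1 - t) / x ^ 2 = (1 - t) * x⁻¹ * x⁻¹ := by field_simp
  rw [one_div, hq]
  rw [abs_le] at hphi ⊢
  constructor <;> nlinarith [mul_pos hxinv hxinv, ht.1, ht.2]

lemma log_sub_one_eq {x : ℝ} (hx : 1 < x) : log (x - 1) = log x + log (1 - x⁻¹) := by
  have hx0 : x ≠ 0 := by positivity
  rw [← log_mul hx0 (by linarith [inv_lt_one_of_one_lt₀ hx])]
  congr 1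
  field_simp

lemma tendsto_log_one_sub_inv_atTop : Tendsto (fun x : ℝ => log (1 - x⁻¹)) atTop (𝓝 0) := by
  have h : Tendsto (fun x : ℝ => 1 - x⁻¹) atTop (𝓝 1) := by
    simpa using tendsto_inv_atTop_zero.const_sub (1 : ℝ)
  have h' := (continuousAt_log one_ne_zero).tendsto.comp h
  rwa [log_one] at h'

lemma tendsto_mul_log_atTop_of_abs_le {f : ℝ → ℝ} {C : ℝ}
    (hf : ∀ᶠ x in atTop, |f x| ≤ C * √x⁻¹) :
    Tendsto (fun x => f x * log x) atTop (𝓝 0) := by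
  have hlog : Tendsto (fun x => C * (√x⁻¹ * log x)) atTop (𝓝 0) := by
    have h : Tendsto (fun x => log x / √x) atTop (𝓝 0) :=
      (isLittleO_log_rpow_atTop (by norm_num : (0 : ℝ) < 1 / 2)).tendsto_div_nhds_zero.congr
        fun x => by rw [sqrt_eq_rpow]
    simpa only [sqrt_inv, div_eq_inv_mul, mul_zero] using h.const_mul C
  refine squeeze_zero_norm' ?_ hlog
  filter_upwards [hf, eventually_ge_atTop 1] with x hfx hx
  rw [norm_mul, norm_eq_abs, norm_eq_abs, abs_of_nonneg (log_nonneg hx), ← mul_assoc]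
  exact mul_le_mul_of_nonneg_right hfx (log_nonneg hx)

theorem tendsto_spikeEntropy_gap {t : ℝ} (ht : t ∈ Ioo 0 1) :
    Tendsto (fun x : ℝ => spikeEntropy (t + (1 - t) / x ^ 2) (x ^ 2 - 1) ((1 - t) / x ^ 2)
        - 2 * spikeEntropy (phi (1 / x) t) (x - 1) ((1 - phi (1 / x) t) / (x - 1)))
      atTop (𝓝 (t * log t + (1 - t) * log (1 - t))) := by
  obtain ⟨ht0, ht1⟩ := ht
  set p : ℝ → ℝ := fun x => t + (1 - t) / x ^ 2
  set a : ℝ → ℝ := fun x => phi (1 / x) t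
  have hp : Tendsto p atTop (𝓝 t) := by
    simpa using tendsto_const_nhds.add
      (tendsto_const_nhds.div_atTop (tendsto_pow_atTop (α := ℝ) two_ne_zero))
  have ha : Tendsto a atTop (𝓝 t) := tendsto_phi_one_div_atTop ht0.le
  have hbin : Tendsto (fun x => binEntropy (p x) - 2 * binEntropy (a x)) atTop
      (𝓝 (t * log t + (1 - t) * log (1 - t))) := by
    have hlim : t * log t + (1 - t) * log (1 - t) = binEntropy t - 2 * binEntropy t := by
      rw [binEntropy_eq_negMulLog_add_negMulLog_one_sub, negMulLog, negMulLog]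
      ring
    rw [hlim]
    exact ((binEntropy_continuous.tendsto t).comp hp).sub
      (((binEntropy_continuous.tendsto t).comp ha).const_mul 2)
  have hlog : Tendsto (fun x => (1 - p x) * log (1 - (x ^ 2)⁻¹) - 2 * ((1 - a x) * log (1 - x⁻¹)))
      atTop (𝓝 0) := by
    simpa using ((hp.const_sub 1).mul (tendsto_log_one_sub_inv_atTop.comp
      (tendsto_pow_atTop two_ne_zero))).sub
      (((ha.const_sub 1).mul tendsto_log_one_sub_inv_atTop).const_mul 2)
  have hsing : Tendsto (fun x => 2 * ((a x - p x) * log x)) atTop (𝓝 0) :=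
    (tendsto_mul_log_atTop_of_abs_le (C := 4) <| (eventually_ge_atTop 1).mono fun _ hx =>
      abs_phi_one_div_sub_le ⟨ht0.le, ht1.le⟩ hx).const_mul 2 |>.trans (by simp)
  refine ((hbin.add hlog).add hsing).congr' ?_ |>.trans (by simp)
  filter_upwards [eventually_gt_atTop 1] with x hx
  have hx0 : x ≠ 0 := by positivity
  have hx1 : x - 1 ≠ 0 := by linarith
  have hx2 : x ^ 2 - 1 ≠ 0 := by nlinarith
  have hγ : p x + (x ^ 2 - 1) * ((1 - t) / x ^ 2) = 1 := by simp only [p]; field_simp; ring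
  have hxstar : a x + (x - 1) * ((1 - a x) / (x - 1)) = 1 := by rw [mul_div_cancel₀ _ hx1]; ring
  rw [spikeEntropy_eq_binEntropy_add hx2 hγ, spikeEntropy_eq_binEntropy_add hx1 hxstar,
    log_sub_one_eq hx, log_sub_one_eq (one_lt_pow₀ hx two_ne_zero), log_pow]
  push_cast
  ring

theorem stmt_19 (t : ℝ) (ht : t ∈ Set.Ioo (0 : ℝ) 1) :
    Tendsto (fun k : ℕ =>
      -- H(γ*_t) for output dimension k
      (-((t + (1 - t) / (k : ℝ) ^ 2) * Real.log (t + (1 - t) / (k : ℝ) ^ 2)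
          + ((k : ℝ) ^ 2 - 1) * ((1 - t) / (k : ℝ) ^ 2) * Real.log ((1 - t) / (k : ℝ) ^ 2)))
      -- minus 2 H(x*_t)
      - 2 * (-((Real.sqrt ((1 - t) / (k : ℝ)) + Real.sqrt (t * (1 - 1 / (k : ℝ)))) ^ 2
              * Real.log ((Real.sqrt ((1 - t) / (k : ℝ)) + Real.sqrt (t * (1 - 1 / (k : ℝ)))) ^ 2)
            + ((k : ℝ) - 1)
              * ((1 - (Real.sqrt ((1 - t) / (k : ℝ)) + Real.sqrt (t * (1 - 1 / (k : ℝ)))) ^ 2) / ((k : ℝ) - 1))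
              * Real.log ((1 - (Real.sqrt ((1 - t) / (k : ℝ)) + Real.sqrt (t * (1 - 1 / (k : ℝ)))) ^ 2) / ((k : ℝ) - 1)))))
      atTop (nhds (t * Real.log t + (1 - t) * Real.log (1 - t))) := by
  simpa only [Function.comp_def, spikeEntropy, phi, mul_one_div] using
    (tendsto_spikeEntropy_gap ht).comp tendsto_natCast_atTop_atTop
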